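/- arXiv:1405.3405 — 3 statements merged into one kernel-verified Lean document; each statement's English description precedes it below -/
import Mathlib

section
/- Let u ∈ ℝ⁷ with ‖u‖ = 1 (a point of S⁶). Then the map Jᵤ : v ↦ u × v preserves the orthogonal complement {u}^⊥ (i.e. ⟨u, v⟩ = 0 implies ⟨u, u × v⟩ = 0) and squares to minus the identity on it: for every v with ⟨u, v⟩ = 0 one has u × (u × v) = −v. Thus Jᵤ defines a complex structure on the tangent space T_u S⁶ = {u}^⊥. -/
open scoped RealInnerProductSpace

/-- The seven-dimensional cross product on `ℝ⁷`, the unique bilinear map with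
`⟪u × v, w⟫ = φ(u,v,w)` for the `G₂`-invariant 3-form
`φ = e¹²³ + e¹⁴⁵ + e¹⁶⁷ + e²⁴⁶ − e²⁵⁷ − e³⁴⁷ − e³⁵⁶`.
(Indices here are `0`-based: component `i` below is component `i+1` in classical notation.) -/
noncomputable def crossR7 (u v : EuclideanSpace ℝ (Fin 7)) : EuclideanSpace ℝ (Fin 7) :=
  (WithLp.equiv 2 (Fin 7 → ℝ)).symm
    ![u 1 * v 2 - u 2 * v 1 + u 3 * v 4 - u 4 * v 3 + u 5 * v 6 - u 6 * v 5,
      u 2 * v 0 - u 0 * v 2 + u 3 * v 5 - u 5 * v 3 - u 4 * v 6 + u 6 * v 4,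
      u 0 * v 1 - u 1 * v 0 - u 3 * v 6 + u 6 * v 3 - u 4 * v 5 + u 5 * v 4,
      u 4 * v 0 - u 0 * v 4 + u 5 * v 1 - u 1 * v 5 + u 2 * v 6 - u 6 * v 2,
      u 0 * v 3 - u 3 * v 0 + u 1 * v 6 - u 6 * v 1 + u 2 * v 5 - u 5 * v 2,
      u 6 * v 0 - u 0 * v 6 + u 1 * v 3 - u 3 * v 1 + u 4 * v 2 - u 2 * v 4,
      u 0 * v 5 - u 5 * v 0 + u 4 * v 1 - u 1 * v 4 + u 3 * v 2 - u 2 * v 3]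

lemma crossR7_apply_0 (u v : EuclideanSpace ℝ (Fin 7)) :
    crossR7 u v 0 = u 1 * v 2 - u 2 * v 1 + u 3 * v 4 - u 4 * v 3 + u 5 * v 6 - u 6 * v 5 := rfl

lemma crossR7_apply_1 (u v : EuclideanSpace ℝ (Fin 7)) :
    crossR7 u v 1 = u 2 * v 0 - u 0 * v 2 + u 3 * v 5 - u 5 * v 3 - u 4 * v 6 + u 6 * v 4 := rfl

lemma crossR7_apply_2 (u v : EuclideanSpace ℝ (Fin 7)) :
    crossR7 u v 2 = u 0 * v 1 - u 1 * v 0 - u 3 * v 6 + u 6 * v 3 - u 4 * v 5 + u 5 * v 4 := rfl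

lemma crossR7_apply_3 (u v : EuclideanSpace ℝ (Fin 7)) :
    crossR7 u v 3 = u 4 * v 0 - u 0 * v 4 + u 5 * v 1 - u 1 * v 5 + u 2 * v 6 - u 6 * v 2 := rfl

lemma crossR7_apply_4 (u v : EuclideanSpace ℝ (Fin 7)) :
    crossR7 u v 4 = u 0 * v 3 - u 3 * v 0 + u 1 * v 6 - u 6 * v 1 + u 2 * v 5 - u 5 * v 2 := rfl

lemma crossR7_apply_5 (u v : EuclideanSpace ℝ (Fin 7)) :
    crossR7 u v 5 = u 6 * v 0 - u 0 * v 6 + u 1 * v 3 - u 3 * v 1 + u 4 * v 2 - u 2 * v 4 := rfl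

lemma crossR7_apply_6 (u v : EuclideanSpace ℝ (Fin 7)) :
    crossR7 u v 6 = u 0 * v 5 - u 5 * v 0 + u 4 * v 1 - u 1 * v 4 + u 3 * v 2 - u 2 * v 3 := rfl

/-- For a unit vector `u ∈ S⁶`, the map `Jᵤ : v ↦ u × v` preserves the orthogonal complement
of `u` and squares to minus the identity on it, hence defines a complex structure on
`TᵤS⁶ = {u}^⊥`. -/
theorem crossR7_complex_structure (u : EuclideanSpace ℝ (Fin 7)) (hu : ‖u‖ = 1) :
    ∀ v : EuclideanSpace ℝ (Fin 7), ⟪u, v⟫ = 0 →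
      ⟪u, crossR7 u v⟫ = 0 ∧ crossR7 u (crossR7 u v) = -v := by
  intro v hv
  have hu2 : ⟪u, u⟫ = 1 := by
    rw [real_inner_self_eq_norm_sq, hu]; norm_num
  simp only [PiLp.inner_apply, RCLike.inner_apply, conj_trivial, Fin.sum_univ_seven] at hv hu2 ⊢
  constructor
  · simp only [crossR7_apply_0, crossR7_apply_1, crossR7_apply_2, crossR7_apply_3,
      crossR7_apply_4, crossR7_apply_5, crossR7_apply_6]
    ring
  · ext i
    fin_cases i
    · show crossR7 u (crossR7 u v) 0 = (-v) 0
      simp only [crossR7_apply_0, crossR7_apply_1, crossR7_apply_2, crossR7_apply_3,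
        crossR7_apply_4, crossR7_apply_5, crossR7_apply_6, PiLp.neg_apply]
      linear_combination u 0 * hv - v 0 * hu2
    · show crossR7 u (crossR7 u v) 1 = (-v) 1
      simp only [crossR7_apply_0, crossR7_apply_1, crossR7_apply_2, crossR7_apply_3,
        crossR7_apply_4, crossR7_apply_5, crossR7_apply_6, PiLp.neg_apply]
      linear_combination u 1 * hv - v 1 * hu2
    · show crossR7 u (crossR7 u v) 2 = (-v) 2
      simp only [crossR7_apply_0, crossR7_apply_1, crossR7_apply_2, crossR7_apply_3,
        crossR7_apply_4, crossR7_apply_5, crossR7_apply_6, PiLp.neg_apply]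
      linear_combination u 2 * hv - v 2 * hu2
    · show crossR7 u (crossR7 u v) 3 = (-v) 3
      simp only [crossR7_apply_0, crossR7_apply_1, crossR7_apply_2, crossR7_apply_3,
        crossR7_apply_4, crossR7_apply_5, crossR7_apply_6, PiLp.neg_apply]
      linear_combination u 3 * hv - v 3 * hu2
    · show crossR7 u (crossR7 u v) 4 = (-v) 4
      simp only [crossR7_apply_0, crossR7_apply_1, crossR7_apply_2, crossR7_apply_3,
        crossR7_apply_4, crossR7_apply_5, crossR7_apply_6, PiLp.neg_apply]
      linear_combination u 4 * hv - v 4 * hu2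
    · show crossR7 u (crossR7 u v) 5 = (-v) 5
      simp only [crossR7_apply_0, crossR7_apply_1, crossR7_apply_2, crossR7_apply_3,
        crossR7_apply_4, crossR7_apply_5, crossR7_apply_6, PiLp.neg_apply]
      linear_combination u 5 * hv - v 5 * hu2
    · show crossR7 u (crossR7 u v) 6 = (-v) 6
      simp only [crossR7_apply_0, crossR7_apply_1, crossR7_apply_2, crossR7_apply_3,
        crossR7_apply_4, crossR7_apply_5, crossR7_apply_6, PiLp.neg_apply]
      linear_combination u 6 * hv - v 6 * hu2
end

section
/- Let u ∈ ℝ⁷ with ‖u‖ = 1. Then the complex structure Jᵤ : v ↦ u × v on {u}^⊥ is compatible with the round metric: for all v, w ∈ ℝ⁷ with ⟨u, v⟩ = 0 and ⟨u, w⟩ = 0 one has ⟨u × v, u × w⟩ = ⟨v, w⟩. -/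
open scoped RealInnerProductSpace

/-- For imaginary octonions `u v = -⟪u, v⟫ + u × v`, so this is the polarized form of
`‖u v‖ = ‖u‖ ‖v‖`; here it is checked as a polynomial identity in the coordinates. -/
theorem inner_crossR7_crossR7 (u v w : EuclideanSpace ℝ (Fin 7)) :
    ⟪crossR7 u v, crossR7 u w⟫ = ⟪u, u⟫ * ⟪v, w⟫ - ⟪u, v⟫ * ⟪u, w⟫ := by
  simp only [crossR7, PiLp.inner_apply, RCLike.inner_apply, conj_trivial, Fin.sum_univ_seven,
    WithLp.equiv_symm_apply, Matrix.cons_val]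
  ring

/-- For a unit vector `u ∈ S⁶`, the complex structure `Jᵤ : v ↦ u × v` on `{u}^⊥` is
compatible with the round metric: `⟪u × v, u × w⟫ = ⟪v, w⟫` for `v, w ⊥ u`. -/
theorem crossR7_metric_compatible (u : EuclideanSpace ℝ (Fin 7)) (hu : ‖u‖ = 1) :
    ∀ v w : EuclideanSpace ℝ (Fin 7), ⟪u, v⟫ = 0 → ⟪u, w⟫ = 0 →
      ⟪crossR7 u v, crossR7 u w⟫ = ⟪v, w⟫ := by
  intro v w hv _
  rw [inner_crossR7_crossR7, hv, real_inner_self_eq_norm_sq, hu]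
  ring
end

section
/- Let u ∈ ℝ⁷ with ‖u‖ = 1. Define the bilinear form ωᵤ on {u}^⊥ by ωᵤ(v, w) = ⟨u × v, w⟩. Then for every v with ⟨u, v⟩ = 0 one has ωᵤ(v, u × v) = ‖v‖²; in particular, for every nonzero v ∈ {u}^⊥ there exists w ∈ {u}^⊥ with ωᵤ(v, w) ≠ 0, so ωᵤ is a nondegenerate (symplectic) form on {u}^⊥. -/
open scoped RealInnerProductSpace

private lemma crossR7_apply (u v : EuclideanSpace ℝ (Fin 7)) :
    crossR7 u v 0 = u 1 * v 2 - u 2 * v 1 + u 3 * v 4 - u 4 * v 3 + u 5 * v 6 - u 6 * v 5 ∧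
    crossR7 u v 1 = u 2 * v 0 - u 0 * v 2 + u 3 * v 5 - u 5 * v 3 - u 4 * v 6 + u 6 * v 4 ∧
    crossR7 u v 2 = u 0 * v 1 - u 1 * v 0 - u 3 * v 6 + u 6 * v 3 - u 4 * v 5 + u 5 * v 4 ∧
    crossR7 u v 3 = u 4 * v 0 - u 0 * v 4 + u 5 * v 1 - u 1 * v 5 + u 2 * v 6 - u 6 * v 2 ∧
    crossR7 u v 4 = u 0 * v 3 - u 3 * v 0 + u 1 * v 6 - u 6 * v 1 + u 2 * v 5 - u 5 * v 2 ∧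
    crossR7 u v 5 = u 6 * v 0 - u 0 * v 6 + u 1 * v 3 - u 3 * v 1 + u 4 * v 2 - u 2 * v 4 ∧
    crossR7 u v 6 = u 0 * v 5 - u 5 * v 0 + u 4 * v 1 - u 1 * v 4 + u 3 * v 2 - u 2 * v 3 :=
  ⟨rfl, rfl, rfl, rfl, rfl, rfl, rfl⟩

/-- For a unit vector `u ∈ S⁶`, the 2-form `ωᵤ(v, w) = ⟪u × v, w⟫` on `{u}^⊥` satisfies
`ωᵤ(v, u × v) = ‖v‖²`; in particular, for every nonzero `v ⊥ u` there is `w ⊥ u` with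
`ωᵤ(v, w) ≠ 0`, so `ωᵤ` is a nondegenerate (symplectic) form on `{u}^⊥`. -/
theorem crossR7_omega_nondegenerate (u : EuclideanSpace ℝ (Fin 7)) (hu : ‖u‖ = 1) :
    (∀ v : EuclideanSpace ℝ (Fin 7), ⟪u, v⟫ = 0 →
      ⟪crossR7 u v, crossR7 u v⟫ = ‖v‖ ^ 2) ∧
    (∀ v : EuclideanSpace ℝ (Fin 7), ⟪u, v⟫ = 0 → v ≠ 0 →
      ∃ w : EuclideanSpace ℝ (Fin 7), ⟪u, w⟫ = 0 ∧ ⟪crossR7 u v, w⟫ ≠ 0) := by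

  have key : ∀ v : EuclideanSpace ℝ (Fin 7), ⟪u, v⟫ = 0 →
      ⟪crossR7 u v, crossR7 u v⟫ = ‖v‖ ^ 2 := by
    intro v hv
    have hnv : ‖v‖ ^ 2 = ⟪v, v⟫ := (real_inner_self_eq_norm_sq v).symm
    have hnu : ⟪u, u⟫ = 1 := by
      rw [real_inner_self_eq_norm_sq, hu]; norm_num
    rw [hnv]
    obtain ⟨h0, h1, h2, h3, h4, h5, h6⟩ := crossR7_apply u v
    simp only [PiLp.inner_apply, RCLike.inner_apply, conj_trivial,
      Fin.sum_univ_seven] at hv hnu ⊢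
    rw [h0, h1, h2, h3, h4, h5, h6]
    linear_combination (v 0 * v 0 + v 1 * v 1 + v 2 * v 2 + v 3 * v 3 + v 4 * v 4
        + v 5 * v 5 + v 6 * v 6) * hnu
      - (u 0 * v 0 + u 1 * v 1 + u 2 * v 2 + u 3 * v 3 + u 4 * v 4
        + u 5 * v 5 + u 6 * v 6) * hv
  refine ⟨key, fun v hv hv0 => ⟨crossR7 u v, ?_, ?_⟩⟩
  · obtain ⟨h0, h1, h2, h3, h4, h5, h6⟩ := crossR7_apply u v
    simp only [PiLp.inner_apply, RCLike.inner_apply, conj_trivial, Fin.sum_univ_seven]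
    rw [h0, h1, h2, h3, h4, h5, h6]
    ring
  · rw [key v hv]
    have : ‖v‖ ≠ 0 := norm_ne_zero_iff.mpr hv0
    positivity
end
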